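/- Assume the noise variables w_1,…,w_T are independent and each takes only finitely many values, and assume each Bellman function 𝒱_t is measurable. Fix (x_0, z_0) ∈ 𝕏_0 × ℝ^m, and for τ = 0,…,T let W_τ denote the infimum, over all finite processes (U_t, V_t)_{t=0}^{τ−1} with σ(U_t) ⊆ ℱ_{0:t}, σ(V_t) ⊆ ℱ_{0:t+1}, V_t integrable with E[V_t | ℱ_{0:t}] = 0, and with induced states X_0 = x_0, Z_0 = z_0, X_{t+1} = f_t(X_t, U_t, w_{t+1}), Z_{t+1} = Z_t + V_t, of E[Σ_{t=0}^{τ−1} L_t(X_t, U_t, w_{t+1}) + 𝒱_τ(X_τ, Z_τ)]. Then W_{τ+1} = W_τ for every τ = 0,…,T−1; in particular W_T = 𝒱_0(x_0, z_0). -/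

import Mathlib

open MeasureTheory ProbabilityTheory
open scoped ENNReal BigOperators

section Setup

variable {Ω : Type*} [MeasurableSpace Ω] {m : ℕ}
  {𝕏 : ℕ → Type*} [∀ t, MeasurableSpace (𝕏 t)]
  {𝕌 : ℕ → Type*} [∀ t, MeasurableSpace (𝕌 t)]
  {𝕎 : ℕ → Type*} [∀ t, MeasurableSpace (𝕎 t)]

/-- The σ-field `ℱ_{t0:t} = σ(w_{t0+1}, …, w_t)` generated by the noise variables,
with `ℱ_{t0:t0}` the trivial σ-field. -/
def noiseFiltration (w : (t : ℕ) → Ω → 𝕎 t) (t0 t : ℕ) : MeasurableSpace Ω :=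
  ⨆ s ∈ Set.Icc (t0 + 1) t, MeasurableSpace.comap (w s) inferInstance

variable (μ : Measure Ω) (w : (t : ℕ) → Ω → 𝕎 t)
  (f : (t : ℕ) → 𝕏 t → 𝕌 t → 𝕎 (t + 1) → 𝕏 (t + 1))
  (L : (t : ℕ) → 𝕏 t → 𝕌 t → 𝕎 (t + 1) → ℝ≥0∞)

/-- Processes `(U_t, V_t)_{t<τ}` with induced states `(X, Z)` starting from `(x0, z0)`
at time `0`, satisfying the dynamics, nonanticipativity and martingale-type constraints
up to time `τ`. -/
def AdmissibleUpTo (x0 : 𝕏 0) (z0 : Fin m → ℝ) (τ : ℕ)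
    (U : (t : ℕ) → Ω → 𝕌 t) (V : ℕ → Ω → Fin m → ℝ)
    (X : (t : ℕ) → Ω → 𝕏 t) (Z : ℕ → Ω → Fin m → ℝ) : Prop :=
  (∀ ω, X 0 ω = x0) ∧
  (∀ t, t < τ → ∀ ω, X (t + 1) ω = f t (X t ω) (U t ω) (w (t + 1) ω)) ∧
  (∀ t, t < τ →
    MeasurableSpace.comap (U t) inferInstance ≤ noiseFiltration w 0 t) ∧
  (∀ t, t < τ →
    Integrable (V t) μ ∧
    MeasurableSpace.comap (V t) inferInstance ≤ noiseFiltration w 0 (t + 1) ∧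
    μ[V t | noiseFiltration w 0 t] =ᵐ[μ] 0) ∧
  (∀ ω, Z 0 ω = z0) ∧
  (∀ t, t < τ → ∀ ω, Z (t + 1) ω = Z t ω + V t ω)

/-- The value `W_τ` of the truncated problem `𝒫_τ`: the infimum, over admissible
processes up to time `τ`, of the expectation of the cumulated cost up to `τ` plus the
Bellman function `𝒱_τ` evaluated at the state `(X_τ, Z_τ)`. -/
noncomputable def valueUpTo (𝒱 : (t : ℕ) → 𝕏 t → (Fin m → ℝ) → ℝ≥0∞)
    (x0 : 𝕏 0) (z0 : Fin m → ℝ) (τ : ℕ) : ℝ≥0∞ :=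
  ⨅ (U : (t : ℕ) → Ω → 𝕌 t) (V : ℕ → Ω → Fin m → ℝ)
    (X : (t : ℕ) → Ω → 𝕏 t) (Z : ℕ → Ω → Fin m → ℝ)
    (_ : AdmissibleUpTo μ w f x0 z0 τ U V X Z),
    ∫⁻ ω, (∑ t ∈ Finset.range τ, L t (X t ω) (U t ω) (w (t + 1) ω))
      + 𝒱 τ (X τ ω) (Z τ ω) ∂μ

end Setup

/-!
For `τ < T` the σ-algebra `ℱ_{0:τ}` is generated by finitely many finite-valued noises, so it is
finite and `Ω` splits into finitely many atoms. Every `ℱ_{0:τ}`-measurable real quantity (the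
constraint level, the costs) is constant on an atom `A`, while the next noise `w_{τ+1}` is
independent of `A`.

`W_τ ≤ W_{τ+1}`: on an atom `A` of positive measure, an `ℱ_{0:τ+1}`-measurable increment `V_τ`
coincides with some function `Ṽ` of `w_{τ+1}` alone, and `μ(A) E[Ṽ] = ∫_A V_τ = 0` by independence
and `E[V_τ | ℱ_{0:τ}] = 0`. So the expected cost of step `τ` over `A` is `μ(A)` times an admissible
value of the one-step Bellman problem at the state of `A`, hence at least `∫_A 𝒱_τ(X_τ, Z_τ)`.

`W_{τ+1} ≤ W_τ`: choosing on each atom an `ε`-optimal control and increment of the one-step Bellman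
problem at its state and gluing them gives an admissible extension of any admissible process up to
`τ`, whose cost exceeds the original one by at most `ε`.

Finally `W_0 = 𝒱_0(x_0, z_0)` since the states at time `0` are deterministic.
-/

namespace MeasurableSpace

variable {Ω : Type*} (G : MeasurableSpace Ω)

def atom (ω : Ω) : Set Ω := ⋂₀ {s | MeasurableSet[G] s ∧ ω ∈ s}

noncomputable def atomRep (ω : Ω) : Ω := @Classical.epsilon Ω ⟨ω⟩ (· ∈ G.atom ω)

variable {G} {ω ω' : Ω}

lemma mem_atom (ω : Ω) : ω ∈ G.atom ω := Set.mem_sInter.2 fun _ hs => hs.2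

lemma atom_subset {s : Set Ω} (hs : MeasurableSet[G] s) (hω : ω ∈ s) : G.atom ω ⊆ s :=
  Set.sInter_subset_of_mem ⟨hs, hω⟩

lemma mem_iff_of_mem_atom {s : Set Ω} (hs : MeasurableSet[G] s) (h : ω' ∈ G.atom ω) :
    ω' ∈ s ↔ ω ∈ s :=
  ⟨fun hω' => by_contra fun hω => atom_subset hs.compl hω h hω', fun hω => atom_subset hs hω h⟩

lemma atom_eq_of_mem (h : ω' ∈ G.atom ω) : G.atom ω' = G.atom ω := by
  unfold atom
  congr 1
  ext s
  exact and_congr_right fun hs => mem_iff_of_mem_atom hs h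

lemma eq_of_mem_atom {E : Type*} [MeasurableSpace E] [MeasurableSingletonClass E] {F : Ω → E}
    (hF : Measurable[G] F) (h : ω' ∈ G.atom ω) : F ω' = F ω :=
  (mem_iff_of_mem_atom (hF (measurableSet_singleton (F ω))) h).2 rfl

lemma mem_atom_sup {H : MeasurableSpace Ω} (hG : ω' ∈ G.atom ω) (hH : ω' ∈ H.atom ω) :
    ω' ∈ (G ⊔ H).atom ω := by
  let S : MeasurableSpace Ω :=
    { MeasurableSet' := fun s => ω' ∈ s ↔ ω ∈ s
      measurableSet_empty := Iff.rfl
      measurableSet_compl := fun _ h => not_congr h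
      measurableSet_iUnion := fun _ h => by simp only [Set.mem_iUnion]; exact exists_congr h }
  have hS : G ⊔ H ≤ S :=
    sup_le (fun _ hs => mem_iff_of_mem_atom hs hG) (fun _ hs => mem_iff_of_mem_atom hs hH)
  exact Set.mem_sInter.2 fun s ⟨hs, hωs⟩ => (hS s hs).2 hωs

lemma atomRep_mem_atom (ω : Ω) : G.atomRep ω ∈ G.atom ω :=
  Classical.epsilon_spec ⟨ω, mem_atom ω⟩

lemma atomRep_eq_of_mem (h : ω' ∈ G.atom ω) : G.atomRep ω' = G.atomRep ω := by
  unfold atomRep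
  rw [atom_eq_of_mem h]

lemma mem_atom_atomRep (ω : Ω) : ω ∈ G.atom (G.atomRep ω) := by
  rw [atom_eq_of_mem (atomRep_mem_atom ω)]
  exact mem_atom ω

lemma atomRep_atomRep (ω : Ω) : G.atomRep (G.atomRep ω) = G.atomRep ω :=
  atomRep_eq_of_mem (atomRep_mem_atom ω)

lemma pairwiseDisjoint_atom : (Set.range G.atomRep).PairwiseDisjoint G.atom := by
  rintro _ ⟨a, rfl⟩ _ ⟨b, rfl⟩ hab
  refine Set.disjoint_left.2 fun ω ha hb => hab ?_
  rw [← atomRep_atomRep a, ← atomRep_atomRep b, ← atomRep_eq_of_mem ha, atomRep_eq_of_mem hb]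

lemma measurableSet_atom (hG : {s | MeasurableSet[G] s}.Finite) (ω : Ω) :
    MeasurableSet[G] (G.atom ω) :=
  MeasurableSet.sInter ((hG.subset fun _ hs => hs.1).countable) fun _ hs => hs.1

lemma measurable_of_forall_mem_atom (hG : {s | MeasurableSet[G] s}.Finite) {β : Type*}
    [MeasurableSpace β] {F : Ω → β} (hF : ∀ ω ω', ω' ∈ G.atom ω → F ω' = F ω) :
    Measurable[G] F := by
  intro S _
  have hS : F ⁻¹' S = ⋃₀ (G.atom '' (F ⁻¹' S)) := by
    ext ω'
    refine ⟨fun h => ⟨_, ⟨ω', h, rfl⟩, mem_atom ω'⟩, ?_⟩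
    rintro ⟨_, ⟨ω, hω, rfl⟩, h⟩
    rwa [Set.mem_preimage, hF ω ω' h]
  rw [hS]
  refine MeasurableSet.sUnion (hG.subset ?_).countable ?_ <;>
    rintro _ ⟨ω, -, rfl⟩ <;> exact measurableSet_atom hG ω

lemma finite_range_atomRep (hG : {s | MeasurableSet[G] s}.Finite) :
    (Set.range G.atomRep).Finite := by
  refine Set.Finite.of_finite_image (f := G.atom) (hG.subset ?_) ?_
  · rintro _ ⟨_, -, rfl⟩
    exact measurableSet_atom hG _
  · rintro _ ⟨a, rfl⟩ _ ⟨b, rfl⟩ hab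
    rw [← atomRep_atomRep a, ← atomRep_eq_of_mem (hab ▸ atomRep_mem_atom (G.atomRep b))]
    simp only [atomRep_atomRep]

lemma sum_indicator_atom (hG : {s | MeasurableSet[G] s}.Finite) {E : Type*} [AddCommMonoid E]
    (F : Ω → Ω → E) :
    ∑ a ∈ (finite_range_atomRep hG).toFinset, (G.atom a).indicator (F a) =
      fun ω => F (G.atomRep ω) ω := by
  ext ω
  have hω : G.atomRep ω ∈ (finite_range_atomRep hG).toFinset := by simp
  rw [Finset.sum_apply, Finset.sum_eq_single_of_mem _ hω fun a ha hne =>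
    Set.indicator_of_notMem (fun h => (pairwiseDisjoint_atom (by simpa using ha)
      (Set.mem_range_self ω) hne).notMem_of_mem_left h (mem_atom_atomRep ω)) _]
  exact Set.indicator_of_mem (mem_atom_atomRep ω) _

lemma finite_measurableSet_comap {β : Type*} [mβ : MeasurableSpace β] {ξ : Ω → β}
    (hξ : (Set.range ξ).Finite) : {s | MeasurableSet[mβ.comap ξ] s}.Finite := by
  refine (hξ.finite_subsets.image (ξ ⁻¹' ·)).subset ?_
  rintro _ ⟨D, -, rfl⟩
  exact ⟨D ∩ Set.range ξ, Set.inter_subset_right, by ext; simp⟩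

end MeasurableSpace

section AtomIntegrals

open MeasurableSpace

variable {Ω : Type*} {G H m0 : MeasurableSpace Ω} {μ : Measure Ω}

lemma setLIntegral_atom (hG : {s | MeasurableSet[G] s}.Finite) (hGm : G ≤ m0)
    {F : Ω → ℝ≥0∞} (hF : Measurable[G] F) (ω₀ : Ω) :
    ∫⁻ ω in G.atom ω₀, F ω ∂μ = μ (G.atom ω₀) * F ω₀ := by
  rw [setLIntegral_congr_fun (hGm _ (measurableSet_atom hG ω₀)) fun ω hω => eq_of_mem_atom hF hω,
    setLIntegral_const, mul_comm]

lemma lintegral_le_lintegral_of_forall_atom (hG : {s | MeasurableSet[G] s}.Finite)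
    (hGm : G ≤ m0) {F F' : Ω → ℝ≥0∞}
    (h : ∀ ω, μ (G.atom ω) ≠ 0 → ∫⁻ x in G.atom ω, F x ∂μ ≤ ∫⁻ x in G.atom ω, F' x ∂μ) :
    ∫⁻ x, F x ∂μ ≤ ∫⁻ x, F' x ∂μ := by
  set R := (finite_range_atomRep hG).toFinset
  have hsum : ∀ F : Ω → ℝ≥0∞, ∫⁻ x, F x ∂μ = ∑ a ∈ R, ∫⁻ x in G.atom a, F x ∂μ := by
    intro F
    have hR : ⋃ a ∈ R, G.atom a = Set.univ :=
      Set.eq_univ_of_forall fun ω => Set.mem_iUnion₂.2 ⟨_, by simp [R], mem_atom_atomRep ω⟩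
    rw [← lintegral_biUnion_finset (by simpa [R] using pairwiseDisjoint_atom)
      (fun a _ => hGm _ (measurableSet_atom hG a)), hR, Measure.restrict_univ]
  rw [hsum F, hsum F']
  refine Finset.sum_le_sum fun a _ => ?_
  by_cases hμ : μ (G.atom a) = 0
  · simp [Measure.restrict_eq_zero.2 hμ]
  · exact h a hμ

variable {E : Type*} [NormedAddCommGroup E]

lemma stronglyMeasurable_atomRep_apply (hG : {s | MeasurableSet[G] s}.Finite) (hGH : G ≤ H)
    {F : Ω → Ω → E} (hF : ∀ a, StronglyMeasurable[H] (F a)) :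
    StronglyMeasurable[H] fun ω => F (G.atomRep ω) ω := by
  rw [← sum_indicator_atom hG F]
  exact Finset.stronglyMeasurable_sum _ fun a _ =>
    (hF a).indicator (hGH _ (measurableSet_atom hG a))

lemma integrable_atomRep_apply (hG : {s | MeasurableSet[G] s}.Finite) (hGm : G ≤ m0)
    {F : Ω → Ω → E} (hF : ∀ a, Integrable (F a) μ) :
    Integrable (fun ω => F (G.atomRep ω) ω) μ := by
  rw [← sum_indicator_atom hG F]
  exact integrable_finsetSum' _ fun a _ => (hF a).indicator (hGm _ (measurableSet_atom hG a))

lemma exists_stronglyMeasurable_eq_on_atom [IsFiniteMeasure μ]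
    (hH : {s | MeasurableSet[H] s}.Finite) (hHm : H ≤ m0) [MeasurableSpace E]
    [MeasurableSingletonClass E] {V : Ω → E} (hV : Measurable[G ⊔ H] V) (ω₀ : Ω) :
    ∃ Vn : Ω → E, StronglyMeasurable[H] Vn ∧ Integrable Vn μ ∧ ∀ ω ∈ G.atom ω₀, V ω = Vn ω := by
  classical
  -- `G.atom ω₀ ∩ H.atom a` lies in a single atom of `G ⊔ H`, on which `V` is constant
  let c : Ω → E := fun a => if h : (G.atom ω₀ ∩ H.atom a).Nonempty then V h.some else 0
  refine ⟨fun ω => c (H.atomRep ω),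
    stronglyMeasurable_atomRep_apply hH le_rfl (F := fun a _ => c a) fun _ =>
      stronglyMeasurable_const,
    integrable_atomRep_apply hH hHm (F := fun a _ => c a) fun _ => integrable_const _,
    fun ω hω => ?_⟩
  have hne : (G.atom ω₀ ∩ H.atom (H.atomRep ω)).Nonempty := ⟨ω, hω, mem_atom_atomRep ω⟩
  simp only [c, dif_pos hne]
  obtain ⟨hpG, hpH⟩ := hne.some_mem
  generalize hne.some = p at hpG hpH ⊢
  rw [← atom_eq_of_mem hω] at hpG
  rw [atom_eq_of_mem (atomRep_mem_atom ω)] at hpH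
  exact (eq_of_mem_atom hV (mem_atom_sup hpG hpH)).symm

end AtomIntegrals

section Independence

variable {Ω : Type*} {G H m0 : MeasurableSpace Ω} {μ : Measure Ω}

lemma setLIntegral_eq_mul_lintegral_of_indep (hGm : G ≤ m0) (hHm : H ≤ m0)
    (hind : Indep G H μ) {A : Set Ω} (hA : MeasurableSet[G] A) {Ψ : Ω → ℝ≥0∞}
    (hΨ : Measurable[H] Ψ) :
    ∫⁻ ω in A, Ψ ω ∂μ = μ A * ∫⁻ ω, Ψ ω ∂μ := by
  rw [← lintegral_indicator (hGm _ hA), ← lintegral_indicator_one (hGm _ hA),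
    ← lintegral_mul_eq_lintegral_mul_lintegral_of_independent_measurableSpace hGm hHm hind
      (Measurable.indicator (@measurable_one _ _ _ G _) hA) hΨ]
  congr 1
  ext ω
  by_cases hω : ω ∈ A <;> simp [hω]

variable [IsFiniteMeasure μ] {E : Type*} [NormedAddCommGroup E] [NormedSpace ℝ E] [CompleteSpace E]

lemma setIntegral_eq_smul_integral_of_indep (hGm : G ≤ m0) (hHm : H ≤ m0)
    (hind : Indep G H μ) {A : Set Ω} (hA : MeasurableSet[G] A) {F : Ω → E}
    (hF : StronglyMeasurable[H] F) (hFi : Integrable F μ) :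
    ∫ ω in A, F ω ∂μ = μ.real A • ∫ ω, F ω ∂μ := by
  rw [← setIntegral_condExp hGm hFi hA, setIntegral_congr_ae (hGm _ hA)
    ((condExp_indep_eq hHm hGm hF hind.symm).mono fun ω h _ => h), setIntegral_const]

lemma condExp_sum_indicator_eq_zero (hGm : G ≤ m0) (hHm : H ≤ m0) (hind : Indep G H μ)
    {ι : Type*} (s : Finset ι) {A : ι → Set Ω} (hA : ∀ i, MeasurableSet[G] (A i))
    {F : ι → Ω → E} (hF : ∀ i, StronglyMeasurable[H] (F i)) (hFi : ∀ i, Integrable (F i) μ)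
    (hF0 : ∀ i, ∫ ω, F i ω ∂μ = 0) :
    μ[∑ i ∈ s, (A i).indicator (F i) | G] =ᵐ[μ] 0 := by
  have hterm : ∀ i ∈ s, μ[(A i).indicator (F i) | G] =ᵐ[μ] 0 := fun i _ =>
    (condExp_indicator (hFi i) (hA i)).trans <|
      (condExp_indep_eq hHm hGm (hF i) hind.symm).mono fun ω h => by simp [h, hF0]
  filter_upwards [condExp_finsetSum (fun i _ => (hFi i).indicator (hGm _ (hA i))) G,
    (Filter.eventually_all_finset s).2 hterm] with ω h1 h2
  rw [h1, Finset.sum_apply, Pi.zero_apply]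
  exact Finset.sum_eq_zero h2

end Independence

section NoiseFiltration

variable {Ω : Type*} {𝕎 : ℕ → Type*} [∀ t, MeasurableSpace (𝕎 t)] (w : (t : ℕ) → Ω → 𝕎 t)

lemma noiseFiltration_le [m0 : MeasurableSpace Ω] (hw : ∀ t, Measurable (w t)) (t0 t : ℕ) :
    noiseFiltration w t0 t ≤ m0 :=
  iSup₂_le fun s _ => (hw s).comap_le

lemma noiseFiltration_mono {t0 t t' : ℕ} (h : t ≤ t') :
    noiseFiltration w t0 t ≤ noiseFiltration w t0 t' :=
  biSup_mono fun _ hs => ⟨hs.1, hs.2.trans h⟩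

lemma measurable_noiseFiltration {t0 t s : ℕ} (hs : s ∈ Set.Icc (t0 + 1) t) :
    Measurable[noiseFiltration w t0 t] (w s) :=
  Measurable.of_comap_le (le_iSup₂ (f := fun s (_ : s ∈ Set.Icc (t0 + 1) t) =>
    MeasurableSpace.comap (w s) inferInstance) s hs)

lemma noiseFiltration_succ {t0 t : ℕ} (h : t0 ≤ t) :
    noiseFiltration w t0 (t + 1) =
      noiseFiltration w t0 t ⊔ MeasurableSpace.comap (w (t + 1)) inferInstance := by
  have hIcc : Set.Icc (t0 + 1) (t + 1) = Set.Icc (t0 + 1) t ∪ {t + 1} := by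
    ext s
    simp only [Set.mem_Icc, Set.mem_union, Set.mem_singleton_iff]
    omega
  rw [noiseFiltration, hIcc, iSup_union, iSup_singleton, noiseFiltration]

lemma noiseFiltration_eq_comap (t0 t : ℕ) :
    noiseFiltration w t0 t =
      MeasurableSpace.comap (fun ω (s : Set.Icc (t0 + 1) t) => w s ω) inferInstance := by
  rw [MeasurableSpace.pi, MeasurableSpace.comap_iSup]
  simp_rw [MeasurableSpace.comap_comp]
  rw [noiseFiltration, iSup_subtype]
  rfl

lemma finite_measurableSet_noiseFiltration {T : ℕ}
    (hfin : ∀ t, 1 ≤ t → t ≤ T → (Set.range (w t)).Finite) (t0 : ℕ) {t : ℕ} (ht : t ≤ T) :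
    {s | MeasurableSet[noiseFiltration w t0 t] s}.Finite := by
  rw [noiseFiltration_eq_comap]
  refine MeasurableSpace.finite_measurableSet_comap ?_
  have : Finite (Set.Icc (t0 + 1) t) := (Set.finite_Icc _ _).to_subtype
  refine (Set.Finite.pi fun s : Set.Icc (t0 + 1) t =>
    hfin s (by have := s.2.1; omega) (s.2.2.trans ht)).subset ?_
  rintro _ ⟨ω, rfl⟩ s -
  exact ⟨ω, rfl⟩

lemma indep_noiseFiltration_comap [m0 : MeasurableSpace Ω] {μ : Measure Ω} {T τ : ℕ}
    (hw : ∀ t, Measurable (w t)) (hindep : iIndepFun (fun t : Fin T => w (t.1 + 1)) μ)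
    (hτ : τ < T) :
    Indep (noiseFiltration w 0 τ) (MeasurableSpace.comap (w (τ + 1)) inferInstance) μ := by
  let F : Fin T → MeasurableSpace Ω := fun i => MeasurableSpace.comap (w (i.1 + 1)) inferInstance
  have h := indep_iSup_of_disjoint (fun i => (hw (i.1 + 1)).comap_le) hindep.iIndep
    (S := {i : Fin T | i.1 < τ}) (T := {i | i.1 = τ})
    (Set.disjoint_left.2 fun i (hi : i.1 < τ) (hi' : i.1 = τ) => by omega)
  refine indep_of_indep_of_le_right (indep_of_indep_of_le_left h ?_) ?_
  · refine iSup₂_le fun s hs => ?_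
    obtain ⟨s, rfl⟩ : ∃ s', s = s' + 1 := ⟨s - 1, by have := hs.1; omega⟩
    exact le_iSup₂ (f := fun i (_ : i ∈ {i : Fin T | i.1 < τ}) => F i) ⟨s, by have := hs.2; omega⟩
      (show s < τ by have := hs.2; omega)
  · exact le_iSup₂ (f := fun i (_ : i ∈ {i : Fin T | i.1 = τ}) => F i) ⟨τ, hτ⟩ rfl

end NoiseFiltration

section Bellman

open MeasurableSpace

-- `G` precedes `m0` so that `m0` is the instance found for `Ω`
variable {Ω : Type*} {G : MeasurableSpace Ω} [m0 : MeasurableSpace Ω] {m : ℕ}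
  {𝕏 : ℕ → Type*} {𝕌 : ℕ → Type*} {𝕎 : ℕ → Type*} [∀ t, MeasurableSpace (𝕎 t)]
  (μ : Measure Ω) (w : (t : ℕ) → Ω → 𝕎 t)
  (f : (t : ℕ) → 𝕏 t → 𝕌 t → 𝕎 (t + 1) → 𝕏 (t + 1))
  (L : (t : ℕ) → 𝕏 t → 𝕌 t → 𝕎 (t + 1) → ℝ≥0∞)
  (𝒱 : (t : ℕ) → 𝕏 t → (Fin m → ℝ) → ℝ≥0∞)

def stepCost (t : ℕ) (x : 𝕏 t) (u : 𝕌 t) (z : Fin m → ℝ) (y : 𝕎 (t + 1))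
    (v : Fin m → ℝ) : ℝ≥0∞ :=
  L t x u y + 𝒱 (t + 1) (f t x u y) (z + v)

noncomputable def bellmanOp (t : ℕ) (x : 𝕏 t) (z : Fin m → ℝ) : ℝ≥0∞ :=
  ⨅ (u : 𝕌 t) (V : Ω → Fin m → ℝ)
    (_ : MeasurableSpace.comap V inferInstance ≤ MeasurableSpace.comap (w (t + 1)) inferInstance)
    (_ : Integrable V μ) (_ : ∫ ω, V ω ∂μ = 0),
    ∫⁻ ω, stepCost f L 𝒱 t x u z (w (t + 1) ω) (V ω) ∂μ

def controlledState (x0 : 𝕏 0) (U : (t : ℕ) → Ω → 𝕌 t) : (t : ℕ) → Ω → 𝕏 t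
  | 0 => fun _ => x0
  | t + 1 => fun ω => f t (controlledState x0 U t ω) (U t ω) (w (t + 1) ω)

variable {μ w f L 𝒱}

lemma bellmanOp_le {t : ℕ} {x : 𝕏 t} {z : Fin m → ℝ} (u : 𝕌 t) {V : Ω → Fin m → ℝ}
    (hV : MeasurableSpace.comap V inferInstance ≤ MeasurableSpace.comap (w (t + 1)) inferInstance)
    (hVi : Integrable V μ) (hV0 : ∫ ω, V ω ∂μ = 0) :
    bellmanOp μ w f L 𝒱 t x z ≤ ∫⁻ ω, stepCost f L 𝒱 t x u z (w (t + 1) ω) (V ω) ∂μ :=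
  iInf_le_of_le u <| iInf_le_of_le V <| iInf_le_of_le hV <| iInf_le_of_le hVi <| iInf_le _ hV0

lemma exists_lintegral_stepCost_le_bellmanOp_add {t : ℕ} [Nonempty (𝕌 t)] (x : 𝕏 t) (z : Fin m → ℝ)
    {ε : ℝ≥0∞} (hε : ε ≠ 0) :
    ∃ (u : 𝕌 t) (V : Ω → Fin m → ℝ),
      MeasurableSpace.comap V inferInstance ≤ MeasurableSpace.comap (w (t + 1)) inferInstance ∧
      Integrable V μ ∧ ∫ ω, V ω ∂μ = 0 ∧
      ∫⁻ ω, stepCost f L 𝒱 t x u z (w (t + 1) ω) (V ω) ∂μ ≤ bellmanOp μ w f L 𝒱 t x z + ε := by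
  by_cases htop : bellmanOp μ w f L 𝒱 t x z = ⊤
  · exact ⟨Classical.arbitrary _, fun _ => 0, measurable_const.comap_le, integrable_zero _ _ _,
      by simp, by simp [htop]⟩
  · have hlt := ENNReal.lt_add_right htop hε
    nth_rewrite 1 [bellmanOp] at hlt
    simp only [iInf_lt_iff] at hlt
    obtain ⟨u, V, hV, hVi, hV0, hlt⟩ := hlt
    exact ⟨u, V, hV, hVi, hV0, hlt.le⟩

variable [∀ t, MeasurableSpace (𝕌 t)] {τ : ℕ} {x0 : 𝕏 0} {z0 : Fin m → ℝ}
  {U : (t : ℕ) → Ω → 𝕌 t} {V : ℕ → Ω → Fin m → ℝ}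
  {X : (t : ℕ) → Ω → 𝕏 t} {Z : ℕ → Ω → Fin m → ℝ}

lemma AdmissibleUpTo.mono (h : AdmissibleUpTo μ w f x0 z0 τ U V X Z) {τ' : ℕ} (hτ : τ' ≤ τ) :
    AdmissibleUpTo μ w f x0 z0 τ' U V X Z := by
  obtain ⟨hX0, hX, hU, hV, hZ0, hZ⟩ := h
  exact ⟨hX0, fun t ht => hX t (ht.trans_le hτ), fun t ht => hU t (ht.trans_le hτ),
    fun t ht => hV t (ht.trans_le hτ), hZ0, fun t ht => hZ t (ht.trans_le hτ)⟩

lemma AdmissibleUpTo.measurable_Z (h : AdmissibleUpTo μ w f x0 z0 τ U V X Z) :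
    ∀ t ≤ τ, Measurable[noiseFiltration w 0 t] (Z t)
  | 0, _ => by
    rw [show Z 0 = fun _ => z0 from funext h.2.2.2.2.1]
    exact measurable_const
  | t + 1, ht => by
    rw [show Z (t + 1) = _ from funext (h.2.2.2.2.2 t ht)]
    exact ((h.measurable_Z t (Nat.le_of_succ_le ht)).mono (noiseFiltration_mono w t.le_succ)
      le_rfl).add (Measurable.of_comap_le (h.2.2.2.1 t ht).2.1)

lemma AdmissibleUpTo.cost_succ (h : AdmissibleUpTo μ w f x0 z0 (τ + 1) U V X Z) (ω : Ω) :
    (∑ t ∈ Finset.range (τ + 1), L t (X t ω) (U t ω) (w (t + 1) ω)) +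
        𝒱 (τ + 1) (X (τ + 1) ω) (Z (τ + 1) ω) =
      (∑ t ∈ Finset.range τ, L t (X t ω) (U t ω) (w (t + 1) ω)) +
        stepCost f L 𝒱 τ (X τ ω) (U τ ω) (Z τ ω) (w (τ + 1) ω) (V τ ω) := by
  rw [Finset.sum_range_succ, h.2.1 τ τ.lt_succ_self ω, h.2.2.2.2.2 τ τ.lt_succ_self ω, add_assoc]
  rfl

lemma AdmissibleUpTo.extend (h : AdmissibleUpTo μ w f x0 z0 τ U V X Z) {u : Ω → 𝕌 τ}
    {v : Ω → Fin m → ℝ} (hu : Measurable[noiseFiltration w 0 τ] u)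
    (hv : Measurable[noiseFiltration w 0 (τ + 1)] v)
    (hvi : Integrable v μ) (hvc : μ[v | noiseFiltration w 0 τ] =ᵐ[μ] 0) :
    AdmissibleUpTo μ w f x0 z0 (τ + 1) (Function.update U τ u) (Function.update V τ v)
      (Function.update X (τ + 1) fun ω => f τ (X τ ω) (u ω) (w (τ + 1) ω))
      (Function.update Z (τ + 1) fun ω => Z τ ω + v ω) := by
  obtain ⟨hX0, hX, hU, hV, hZ0, hZ⟩ := h
  refine ⟨by simpa using hX0, fun t ht => ?_, fun t ht => ?_, fun t ht => ?_, by simpa using hZ0,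
    fun t ht => ?_⟩ <;> rcases Nat.lt_succ_iff_lt_or_eq.1 ht with ht | rfl
  · intro ω; simpa [ht.ne, Function.update_of_ne (show t ≠ τ + 1 by omega)] using hX t ht ω
  · intro ω; simp
  · simpa [ht.ne] using hU t ht
  · simpa using hu.comap_le
  · simpa [ht.ne] using hV t ht
  · simpa using ⟨hvi, hv.comap_le, hvc⟩
  · intro ω; simpa [ht.ne, Function.update_of_ne (show t ≠ τ + 1 by omega)] using hZ t ht ω
  · intro ω; simp

lemma valueUpTo_le_lintegral (h : AdmissibleUpTo μ w f x0 z0 τ U V X Z) :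
    valueUpTo μ w f L 𝒱 x0 z0 τ ≤
      ∫⁻ ω, (∑ t ∈ Finset.range τ, L t (X t ω) (U t ω) (w (t + 1) ω)) + 𝒱 τ (X τ ω) (Z τ ω) ∂μ :=
  iInf_le_of_le U <| iInf_le_of_le V <| iInf_le_of_le X <| iInf_le_of_le Z <| iInf_le _ h

lemma le_valueUpTo {c : ℝ≥0∞}
    (h : ∀ U V X Z, AdmissibleUpTo μ w f x0 z0 τ U V X Z →
      c ≤ ∫⁻ ω, (∑ t ∈ Finset.range τ, L t (X t ω) (U t ω) (w (t + 1) ω)) +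
        𝒱 τ (X τ ω) (Z τ ω) ∂μ) :
    c ≤ valueUpTo μ w f L 𝒱 x0 z0 τ :=
  le_iInf fun U => le_iInf fun V => le_iInf fun X => le_iInf fun Z => le_iInf (h U V X Z)

lemma valueUpTo_zero [IsProbabilityMeasure μ] [∀ t, Nonempty (𝕌 t)] (x0 : 𝕏 0)
    (z0 : Fin m → ℝ) : valueUpTo μ w f L 𝒱 x0 z0 0 = 𝒱 0 x0 z0 := by
  have hcost : ∀ {U V X Z}, AdmissibleUpTo μ w f x0 z0 0 U V X Z →
      ∫⁻ ω, (∑ t ∈ Finset.range 0, L t (X t ω) (U t ω) (w (t + 1) ω)) +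
        𝒱 0 (X 0 ω) (Z 0 ω) ∂μ = 𝒱 0 x0 z0 := fun h => by
    simp [h.1, h.2.2.2.2.1]
  let U : (t : ℕ) → Ω → 𝕌 t := fun _ _ => Classical.arbitrary _
  have h : AdmissibleUpTo μ w f x0 z0 0 U (fun _ _ => 0) (controlledState w f x0 U)
      (fun _ _ => z0) :=
    ⟨fun _ => rfl, by simp, by simp, by simp, fun _ => rfl, by simp⟩
  exact le_antisymm ((valueUpTo_le_lintegral h).trans_eq (hcost h))
    (le_valueUpTo fun _ _ _ _ h => (hcost h).ge)

variable [∀ t, MeasurableSpace (𝕏 t)]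

lemma measurable_stepCost
    (hf : ∀ t, Measurable fun p : 𝕏 t × 𝕌 t × 𝕎 (t + 1) => f t p.1 p.2.1 p.2.2)
    (hL : ∀ t, Measurable fun p : 𝕏 t × 𝕌 t × 𝕎 (t + 1) => L t p.1 p.2.1 p.2.2)
    (h𝒱 : ∀ t, Measurable fun p : 𝕏 t × (Fin m → ℝ) => 𝒱 t p.1 p.2)
    {t : ℕ} {δ : Type*} {mδ : MeasurableSpace δ} {X : δ → 𝕏 t} {U : δ → 𝕌 t}
    {Z V : δ → Fin m → ℝ} {Y : δ → 𝕎 (t + 1)} (hX : Measurable X) (hU : Measurable U)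
    (hZ : Measurable Z) (hY : Measurable Y) (hV : Measurable V) :
    Measurable fun a => stepCost f L 𝒱 t (X a) (U a) (Z a) (Y a) (V a) :=
  ((hL t).comp (hX.prodMk (hU.prodMk hY))).add
    ((h𝒱 (t + 1)).comp (((hf t).comp (hX.prodMk (hU.prodMk hY))).prodMk (hZ.add hV)))

lemma AdmissibleUpTo.measurable_X
    (hf : ∀ t, Measurable fun p : 𝕏 t × 𝕌 t × 𝕎 (t + 1) => f t p.1 p.2.1 p.2.2)
    (h : AdmissibleUpTo μ w f x0 z0 τ U V X Z) :
    ∀ t ≤ τ, Measurable[noiseFiltration w 0 t] (X t)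
  | 0, _ => by
    rw [show X 0 = fun _ => x0 from funext h.1]
    exact measurable_const
  | t + 1, ht => by
    have hle := noiseFiltration_mono w (t0 := 0) t.le_succ
    rw [show X (t + 1) = _ from funext (h.2.1 t ht)]
    exact (hf t).comp (((h.measurable_X hf t (Nat.le_of_succ_le ht)).mono hle le_rfl).prodMk
      (((Measurable.of_comap_le (h.2.2.1 t ht)).mono hle le_rfl).prodMk
        (measurable_noiseFiltration w ⟨le_add_self, le_rfl⟩)))

lemma setLIntegral_atom_stepCost (hG : {s | MeasurableSet[G] s}.Finite) (hGm : G ≤ m0)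
    (hw : Measurable (w (τ + 1)))
    (hind : Indep G (MeasurableSpace.comap (w (τ + 1)) inferInstance) μ)
    (hf : ∀ t, Measurable fun p : 𝕏 t × 𝕌 t × 𝕎 (t + 1) => f t p.1 p.2.1 p.2.2)
    (hL : ∀ t, Measurable fun p : 𝕏 t × 𝕌 t × 𝕎 (t + 1) => L t p.1 p.2.1 p.2.2)
    (h𝒱 : ∀ t, Measurable fun p : 𝕏 t × (Fin m → ℝ) => 𝒱 t p.1 p.2)
    {X : Ω → 𝕏 τ} {U : Ω → 𝕌 τ} {Z V Vn : Ω → Fin m → ℝ} (hX : Measurable[G] X)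
    (hU : Measurable[G] U) (hZ : Measurable[G] Z)
    (hVn : Measurable[MeasurableSpace.comap (w (τ + 1)) inferInstance] Vn) {ω₀ : Ω}
    (hV : ∀ ω ∈ G.atom ω₀, V ω = Vn ω) :
    ∫⁻ ω in G.atom ω₀, stepCost f L 𝒱 τ (X ω) (U ω) (Z ω) (w (τ + 1) ω) (V ω) ∂μ =
      μ (G.atom ω₀) * ∫⁻ ω, stepCost f L 𝒱 τ (X ω₀) (U ω₀) (Z ω₀) (w (τ + 1) ω) (Vn ω) ∂μ := by
  have hA := measurableSet_atom hG ω₀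
  rw [← setLIntegral_eq_mul_lintegral_of_indep hGm hw.comap_le hind hA
    (measurable_stepCost hf hL h𝒱 measurable_const measurable_const measurable_const
      (comap_measurable _) hVn)]
  refine setLIntegral_congr_fun (hGm _ hA) fun ω hω => ?_
  rw [hV ω hω]
  -- as a function of the past alone, the cost is constant on the atom
  exact eq_of_mem_atom (measurable_stepCost hf hL h𝒱 hX hU hZ measurable_const measurable_const) hω

lemma lintegral_le_lintegral_stepCost [IsFiniteMeasure μ] (hG : {s | MeasurableSet[G] s}.Finite)
    (hGm : G ≤ m0) (hw : Measurable (w (τ + 1)))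
    (hH : {s | MeasurableSet[MeasurableSpace.comap (w (τ + 1)) inferInstance] s}.Finite)
    (hind : Indep G (MeasurableSpace.comap (w (τ + 1)) inferInstance) μ)
    (hf : ∀ t, Measurable fun p : 𝕏 t × 𝕌 t × 𝕎 (t + 1) => f t p.1 p.2.1 p.2.2)
    (hL : ∀ t, Measurable fun p : 𝕏 t × 𝕌 t × 𝕎 (t + 1) => L t p.1 p.2.1 p.2.2)
    (h𝒱 : ∀ t, Measurable fun p : 𝕏 t × (Fin m → ℝ) => 𝒱 t p.1 p.2)
    (hrec : ∀ x z, 𝒱 τ x z = bellmanOp μ w f L 𝒱 τ x z)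
    {X : Ω → 𝕏 τ} {U : Ω → 𝕌 τ} {Z V : Ω → Fin m → ℝ} (hX : Measurable[G] X)
    (hU : Measurable[G] U) (hZ : Measurable[G] Z)
    (hV : Measurable[G ⊔ MeasurableSpace.comap (w (τ + 1)) inferInstance] V) (hVi : Integrable V μ)
    (hVc : μ[V | G] =ᵐ[μ] 0) :
    ∫⁻ ω, 𝒱 τ (X ω) (Z ω) ∂μ ≤
      ∫⁻ ω, stepCost f L 𝒱 τ (X ω) (U ω) (Z ω) (w (τ + 1) ω) (V ω) ∂μ := by
  refine lintegral_le_lintegral_of_forall_atom hG hGm fun ω₀ hμ => ?_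
  have hA := measurableSet_atom hG ω₀
  obtain ⟨Vn, hVnm, hVni, hVn⟩ := exists_stronglyMeasurable_eq_on_atom (μ := μ) hH hw.comap_le hV ω₀
  have hVn0 : ∫ ω, Vn ω ∂μ = 0 := by
    have h : μ.real (G.atom ω₀) • ∫ ω, Vn ω ∂μ = 0 := by
      rw [← setIntegral_eq_smul_integral_of_indep hGm hw.comap_le hind hA hVnm hVni,
        ← setIntegral_congr_fun (hGm _ hA) hVn, ← setIntegral_condExp hGm hVi hA,
        setIntegral_congr_ae (hGm _ hA) (hVc.mono fun _ h _ => h)]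
      simp
    refine (smul_eq_zero.1 h).resolve_left ?_
    rw [measureReal_def]
    exact ENNReal.toReal_ne_zero.2 ⟨hμ, measure_ne_top μ _⟩
  calc ∫⁻ ω in G.atom ω₀, 𝒱 τ (X ω) (Z ω) ∂μ = μ (G.atom ω₀) * 𝒱 τ (X ω₀) (Z ω₀) :=
        setLIntegral_atom hG hGm ((h𝒱 τ).comp (hX.prodMk hZ)) ω₀
    _ ≤ μ (G.atom ω₀) *
        ∫⁻ ω, stepCost f L 𝒱 τ (X ω₀) (U ω₀) (Z ω₀) (w (τ + 1) ω) (Vn ω) ∂μ := by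
      rw [hrec]
      gcongr
      exact bellmanOp_le _ hVnm.measurable.comap_le hVni hVn0
    _ = _ := (setLIntegral_atom_stepCost hG hGm hw hind hf hL h𝒱 hX hU hZ hVnm.measurable
        hVn).symm

lemma exists_adapted_lintegral_stepCost_le_add [IsProbabilityMeasure μ] [Nonempty (𝕌 τ)]
    (hG : {s | MeasurableSet[G] s}.Finite) (hGm : G ≤ m0) (hw : Measurable (w (τ + 1)))
    (hind : Indep G (MeasurableSpace.comap (w (τ + 1)) inferInstance) μ)
    (hf : ∀ t, Measurable fun p : 𝕏 t × 𝕌 t × 𝕎 (t + 1) => f t p.1 p.2.1 p.2.2)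
    (hL : ∀ t, Measurable fun p : 𝕏 t × 𝕌 t × 𝕎 (t + 1) => L t p.1 p.2.1 p.2.2)
    (h𝒱 : ∀ t, Measurable fun p : 𝕏 t × (Fin m → ℝ) => 𝒱 t p.1 p.2)
    (hrec : ∀ x z, 𝒱 τ x z = bellmanOp μ w f L 𝒱 τ x z)
    {X : Ω → 𝕏 τ} {Z : Ω → Fin m → ℝ} (hX : Measurable[G] X) (hZ : Measurable[G] Z)
    {ε : ℝ≥0∞} (hε : ε ≠ 0) :
    ∃ (U : Ω → 𝕌 τ) (V : Ω → Fin m → ℝ), Measurable[G] U ∧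
      Measurable[G ⊔ MeasurableSpace.comap (w (τ + 1)) inferInstance] V ∧ Integrable V μ ∧
      μ[V | G] =ᵐ[μ] 0 ∧
      ∫⁻ ω, stepCost f L 𝒱 τ (X ω) (U ω) (Z ω) (w (τ + 1) ω) (V ω) ∂μ ≤
        ∫⁻ ω, 𝒱 τ (X ω) (Z ω) ∂μ + ε := by
  choose u v hvm hvi hv0 hle using fun x z =>
    exists_lintegral_stepCost_le_bellmanOp_add (t := τ) (μ := μ) (w := w) (f := f) (L := L)
      (𝒱 := 𝒱) x z hε
  -- on each atom, play the `ε`-optimal one-step policy of the state of its representative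
  let U : Ω → 𝕌 τ := fun ω => u (X (G.atomRep ω)) (Z (G.atomRep ω))
  let F : Ω → Ω → Fin m → ℝ := fun a => v (X a) (Z a)
  have hF : ∀ a, StronglyMeasurable[MeasurableSpace.comap (w (τ + 1)) inferInstance] (F a) :=
    fun _ => (Measurable.of_comap_le (hvm _ _)).stronglyMeasurable
  have hU : Measurable[G] U :=
    measurable_of_forall_mem_atom hG fun ω ω' h => by simp only [U, atomRep_eq_of_mem h]
  refine ⟨U, fun ω => F (G.atomRep ω) ω, hU,
    (stronglyMeasurable_atomRep_apply hG le_sup_left fun a => (hF a).mono le_sup_right).measurable,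
    integrable_atomRep_apply hG hGm fun _ => hvi _ _, ?_, ?_⟩
  · rw [← sum_indicator_atom hG F]
    exact condExp_sum_indicator_eq_zero hGm hw.comap_le hind _ (measurableSet_atom hG) hF
      (fun _ => hvi _ _) fun _ => hv0 _ _
  calc _ ≤ ∫⁻ ω, 𝒱 τ (X ω) (Z ω) + ε ∂μ :=
        lintegral_le_lintegral_of_forall_atom hG hGm fun ω₀ _ => ?_
    _ = _ := by rw [lintegral_add_right _ measurable_const, lintegral_const, measure_univ, mul_one]
  have ha : G.atomRep (G.atomRep ω₀) = G.atomRep ω₀ := atomRep_atomRep ω₀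
  rw [← atom_eq_of_mem (atomRep_mem_atom ω₀)]
  generalize G.atomRep ω₀ = a at ha ⊢
  rw [setLIntegral_atom_stepCost hG hGm hw hind hf hL h𝒱 hX hU hZ (Measurable.of_comap_le (hvm _ _))
      (Vn := F a) fun ω hω => by rw [atomRep_eq_of_mem hω, ha],
    setLIntegral_atom hG hGm (F := fun ω => 𝒱 τ (X ω) (Z ω) + ε)
      (((h𝒱 τ).comp (hX.prodMk hZ)).add measurable_const) a]
  simp only [U, ha]
  gcongr
  rw [hrec]
  exact hle _ _

lemma valueUpTo_le_valueUpTo_succ [IsFiniteMeasure μ] (hw : ∀ t, Measurable (w t))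
    (hG : {s | MeasurableSet[noiseFiltration w 0 τ] s}.Finite)
    (hH : {s | MeasurableSet[MeasurableSpace.comap (w (τ + 1)) inferInstance] s}.Finite)
    (hind : Indep (noiseFiltration w 0 τ) (MeasurableSpace.comap (w (τ + 1)) inferInstance) μ)
    (hf : ∀ t, Measurable fun p : 𝕏 t × 𝕌 t × 𝕎 (t + 1) => f t p.1 p.2.1 p.2.2)
    (hL : ∀ t, Measurable fun p : 𝕏 t × 𝕌 t × 𝕎 (t + 1) => L t p.1 p.2.1 p.2.2)
    (h𝒱 : ∀ t, Measurable fun p : 𝕏 t × (Fin m → ℝ) => 𝒱 t p.1 p.2)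
    (hrec : ∀ x z, 𝒱 τ x z = bellmanOp μ w f L 𝒱 τ x z) (x0 : 𝕏 0) (z0 : Fin m → ℝ) :
    valueUpTo μ w f L 𝒱 x0 z0 τ ≤ valueUpTo μ w f L 𝒱 x0 z0 (τ + 1) := by
  refine le_valueUpTo fun U V X Z h => ?_
  have hGm := noiseFiltration_le w hw 0 τ
  have hX := h.measurable_X hf τ τ.le_succ
  have hZ := h.measurable_Z τ τ.le_succ
  have h𝒱X : Measurable fun ω => 𝒱 τ (X τ ω) (Z τ ω) := ((h𝒱 τ).comp (hX.prodMk hZ)).mono hGm le_rfl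
  have hU : Measurable[noiseFiltration w 0 τ] (U τ) :=
    Measurable.of_comap_le (h.2.2.1 τ τ.lt_succ_self)
  obtain ⟨hVi, hV, hVc⟩ := h.2.2.2.1 τ τ.lt_succ_self
  rw [noiseFiltration_succ w τ.zero_le] at hV
  have hV := Measurable.of_comap_le hV
  have hsup : noiseFiltration w 0 τ ⊔ MeasurableSpace.comap (w (τ + 1)) inferInstance ≤ m0 :=
    sup_le hGm (hw _).comap_le
  calc valueUpTo μ w f L 𝒱 x0 z0 τ
      ≤ ∫⁻ ω, (∑ t ∈ Finset.range τ, L t (X t ω) (U t ω) (w (t + 1) ω)) +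
          𝒱 τ (X τ ω) (Z τ ω) ∂μ := valueUpTo_le_lintegral (h.mono τ.le_succ)
    _ ≤ ∫⁻ ω, (∑ t ∈ Finset.range τ, L t (X t ω) (U t ω) (w (t + 1) ω)) +
          stepCost f L 𝒱 τ (X τ ω) (U τ ω) (Z τ ω) (w (τ + 1) ω) (V τ ω) ∂μ := by
      rw [lintegral_add_right _ h𝒱X, lintegral_add_right _ (measurable_stepCost hf hL h𝒱
        (hX.mono hGm le_rfl) (hU.mono hGm le_rfl) (hZ.mono hGm le_rfl) (hw _)
        (hV.mono hsup le_rfl))]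
      exact add_le_add_right
        (lintegral_le_lintegral_stepCost hG hGm (hw _) hH hind hf hL h𝒱 hrec hX hU hZ hV hVi hVc) _
    _ = _ := lintegral_congr fun ω => (h.cost_succ ω).symm

lemma valueUpTo_succ_le_valueUpTo [IsProbabilityMeasure μ] [Nonempty (𝕌 τ)]
    (hw : ∀ t, Measurable (w t)) (hG : {s | MeasurableSet[noiseFiltration w 0 τ] s}.Finite)
    (hind : Indep (noiseFiltration w 0 τ) (MeasurableSpace.comap (w (τ + 1)) inferInstance) μ)
    (hf : ∀ t, Measurable fun p : 𝕏 t × 𝕌 t × 𝕎 (t + 1) => f t p.1 p.2.1 p.2.2)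
    (hL : ∀ t, Measurable fun p : 𝕏 t × 𝕌 t × 𝕎 (t + 1) => L t p.1 p.2.1 p.2.2)
    (h𝒱 : ∀ t, Measurable fun p : 𝕏 t × (Fin m → ℝ) => 𝒱 t p.1 p.2)
    (hrec : ∀ x z, 𝒱 τ x z = bellmanOp μ w f L 𝒱 τ x z) (x0 : 𝕏 0) (z0 : Fin m → ℝ) :
    valueUpTo μ w f L 𝒱 x0 z0 (τ + 1) ≤ valueUpTo μ w f L 𝒱 x0 z0 τ := by
  refine le_valueUpTo fun U V X Z h => ENNReal.le_of_forall_pos_le_add fun ε hε _ => ?_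
  have hGm := noiseFiltration_le w hw 0 τ
  have hX := h.measurable_X hf τ le_rfl
  have hZ := h.measurable_Z τ le_rfl
  have h𝒱X : Measurable fun ω => 𝒱 τ (X τ ω) (Z τ ω) := ((h𝒱 τ).comp (hX.prodMk hZ)).mono hGm le_rfl
  obtain ⟨u, v, hu, hv, hvi, hvc, hcost⟩ :=
    exists_adapted_lintegral_stepCost_le_add hG hGm (hw _) hind hf hL h𝒱 hrec hX hZ
      (ε := ε) (by simpa using hε.ne')
  have hvm : Measurable v := hv.mono (sup_le hGm (hw _).comap_le) le_rfl
  rw [← noiseFiltration_succ w τ.zero_le] at hv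
  have h' := h.extend hu hv hvi hvc
  calc valueUpTo μ w f L 𝒱 x0 z0 (τ + 1)
      ≤ ∫⁻ ω, (∑ t ∈ Finset.range τ, L t (X t ω) (U t ω) (w (t + 1) ω)) +
          stepCost f L 𝒱 τ (X τ ω) (u ω) (Z τ ω) (w (τ + 1) ω) (v ω) ∂μ := by
        refine (valueUpTo_le_lintegral h').trans_eq (lintegral_congr fun ω => ?_)
        rw [h'.cost_succ ω]
        congr 1
        · refine Finset.sum_congr rfl fun t ht => ?_
          have ht : t < τ := Finset.mem_range.1 ht
          rw [Function.update_of_ne (show t ≠ τ + 1 by omega), Function.update_of_ne ht.ne]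
        · simp
    _ = (∫⁻ ω, ∑ t ∈ Finset.range τ, L t (X t ω) (U t ω) (w (t + 1) ω) ∂μ) +
          ∫⁻ ω, stepCost f L 𝒱 τ (X τ ω) (u ω) (Z τ ω) (w (τ + 1) ω) (v ω) ∂μ :=
      lintegral_add_right _ (measurable_stepCost hf hL h𝒱 (hX.mono hGm le_rfl)
        (hu.mono hGm le_rfl) (hZ.mono hGm le_rfl) (hw _) hvm)
    _ ≤ (∫⁻ ω, ∑ t ∈ Finset.range τ, L t (X t ω) (U t ω) (w (t + 1) ω) ∂μ) +
          (∫⁻ ω, 𝒱 τ (X τ ω) (Z τ ω) ∂μ + ε) := by gcongr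
    _ = _ := by
      rw [lintegral_add_right _ h𝒱X, add_assoc]

end Bellman

theorem valueUpTo_stationary_general
    {Ω : Type*} [MeasurableSpace Ω] {T m : ℕ}
    {𝕏 : ℕ → Type*} [∀ t, MeasurableSpace (𝕏 t)]
    {𝕌 : ℕ → Type*} [∀ t, MeasurableSpace (𝕌 t)] [∀ t, Nonempty (𝕌 t)]
    {𝕎 : ℕ → Type*} [∀ t, MeasurableSpace (𝕎 t)]
    (μ : Measure Ω) [IsProbabilityMeasure μ]
    (w : (t : ℕ) → Ω → 𝕎 t) (hw : ∀ t, Measurable (w t))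
    (hindep : iIndepFun
      (fun t : Fin T => w (t.1 + 1)) μ)
    (hfin : ∀ t, 1 ≤ t → t ≤ T → (Set.range (w t)).Finite)
    (f : (t : ℕ) → 𝕏 t → 𝕌 t → 𝕎 (t + 1) → 𝕏 (t + 1))
    (hf : ∀ t, Measurable fun p : 𝕏 t × 𝕌 t × 𝕎 (t + 1) => f t p.1 p.2.1 p.2.2)
    (L : (t : ℕ) → 𝕏 t → 𝕌 t → 𝕎 (t + 1) → ℝ≥0∞)
    (hL : ∀ t, Measurable fun p : 𝕏 t × 𝕌 t × 𝕎 (t + 1) => L t p.1 p.2.1 p.2.2)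
    -- the Bellman functions
    (𝒱 : (t : ℕ) → 𝕏 t → (Fin m → ℝ) → ℝ≥0∞)
    (h𝒱meas : ∀ t, Measurable fun p : 𝕏 t × (Fin m → ℝ) => 𝒱 t p.1 p.2)
    (h𝒱rec : ∀ t, t < T → ∀ (x : 𝕏 t) (z : Fin m → ℝ),
      𝒱 t x z =
        ⨅ (u : 𝕌 t) (V : Ω → Fin m → ℝ)
          (_ : MeasurableSpace.comap V inferInstance ≤
                MeasurableSpace.comap (w (t + 1)) inferInstance)
          (_ : Integrable V μ) (_ : ∫ ω, V ω ∂μ = 0),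
          ∫⁻ ω, L t x u (w (t + 1) ω) + 𝒱 (t + 1) (f t x u (w (t + 1) ω)) (z + V ω) ∂μ)
    (x0 : 𝕏 0) (z0 : Fin m → ℝ) :
    (∀ τ, τ < T → valueUpTo μ w f L 𝒱 x0 z0 (τ + 1) = valueUpTo μ w f L 𝒱 x0 z0 τ) ∧
    valueUpTo μ w f L 𝒱 x0 z0 T = 𝒱 0 x0 z0 := by
  have hstep : ∀ τ, τ < T →
      valueUpTo μ w f L 𝒱 x0 z0 (τ + 1) = valueUpTo μ w f L 𝒱 x0 z0 τ := fun τ hτ => by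
    have hG := finite_measurableSet_noiseFiltration w hfin 0 hτ.le
    have hH := MeasurableSpace.finite_measurableSet_comap (hfin (τ + 1) τ.succ_pos hτ)
    have hind := indep_noiseFiltration_comap w hw hindep hτ
    exact le_antisymm
      (valueUpTo_succ_le_valueUpTo hw hG hind hf hL h𝒱meas (h𝒱rec τ hτ) x0 z0)
      (valueUpTo_le_valueUpTo_succ hw hG hH hind hf hL h𝒱meas (h𝒱rec τ hτ) x0 z0)
  refine ⟨hstep, ?_⟩
  suffices ∀ n ≤ T, valueUpTo μ w f L 𝒱 x0 z0 n = 𝒱 0 x0 z0 from this T le_rfl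
  intro n hn
  induction n with
  | zero => exact valueUpTo_zero x0 z0
  | succ n ih => rw [hstep n hn, ih (by omega)]

/-- **Backward induction step for the extended problem (proof of Theorem 2).**
Under independence and finiteness of the noises and measurability of the Bellman
functions, the value `W_τ` of the truncated problem is constant in `τ`; in particular
`W_T = 𝒱_0(x_0, z_0)`. -/
theorem valueUpTo_stationary
    {Ω : Type*} [MeasurableSpace Ω] {T m : ℕ}
    {𝕏 : ℕ → Type*} [∀ t, MeasurableSpace (𝕏 t)] [∀ t, Nonempty (𝕏 t)]
    {𝕌 : ℕ → Type*} [∀ t, MeasurableSpace (𝕌 t)] [∀ t, Nonempty (𝕌 t)]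
    {𝕎 : ℕ → Type*} [∀ t, MeasurableSpace (𝕎 t)]
    (μ : Measure Ω) [IsProbabilityMeasure μ]
    (w : (t : ℕ) → Ω → 𝕎 t) (hw : ∀ t, Measurable (w t))
    (hindep : iIndepFun
      (fun t : Fin T => w (t.1 + 1)) μ)
    (hfin : ∀ t, 1 ≤ t → t ≤ T → (Set.range (w t)).Finite)
    (f : (t : ℕ) → 𝕏 t → 𝕌 t → 𝕎 (t + 1) → 𝕏 (t + 1))
    (hf : ∀ t, Measurable fun p : 𝕏 t × 𝕌 t × 𝕎 (t + 1) => f t p.1 p.2.1 p.2.2)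
    (L : (t : ℕ) → 𝕏 t → 𝕌 t → 𝕎 (t + 1) → ℝ≥0∞)
    (hL : ∀ t, Measurable fun p : 𝕏 t × 𝕌 t × 𝕎 (t + 1) => L t p.1 p.2.1 p.2.2)
    (K : 𝕏 T → ℝ≥0∞) (hK : Measurable K)
    (g : 𝕏 T → Fin m → ℝ) (hg : Measurable g) (hgpos : ∀ x i, 0 ≤ g x i)
    -- the Bellman functions
    (𝒱 : (t : ℕ) → 𝕏 t → (Fin m → ℝ) → ℝ≥0∞)
    (h𝒱meas : ∀ t, Measurable fun p : 𝕏 t × (Fin m → ℝ) => 𝒱 t p.1 p.2)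
    (h𝒱T : ∀ (x : 𝕏 T) (z : Fin m → ℝ),
      ((∀ i, g x i ≤ z i) → 𝒱 T x z = K x) ∧ (¬ (∀ i, g x i ≤ z i) → 𝒱 T x z = ⊤))
    (h𝒱rec : ∀ t, t < T → ∀ (x : 𝕏 t) (z : Fin m → ℝ),
      𝒱 t x z =
        ⨅ (u : 𝕌 t) (V : Ω → Fin m → ℝ)
          (_ : MeasurableSpace.comap V inferInstance ≤
                MeasurableSpace.comap (w (t + 1)) inferInstance)
          (_ : Integrable V μ) (_ : ∫ ω, V ω ∂μ = 0),
          ∫⁻ ω, L t x u (w (t + 1) ω) + 𝒱 (t + 1) (f t x u (w (t + 1) ω)) (z + V ω) ∂μ)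
    (x0 : 𝕏 0) (z0 : Fin m → ℝ) :
    (∀ τ, τ < T → valueUpTo μ w f L 𝒱 x0 z0 (τ + 1) = valueUpTo μ w f L 𝒱 x0 z0 τ) ∧
    valueUpTo μ w f L 𝒱 x0 z0 T = 𝒱 0 x0 z0 :=
  valueUpTo_stationary_general μ w hw hindep hfin f hf L hL 𝒱 h𝒱meas h𝒱rec x0 z0
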